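/- Let α ∈ (0,1), c > 0, κ > 0. Then the function K_α is continuous on ℝ, and for every ξ ≤ 0 one has K_α(ξ) = -(cκ)^α K₀(ξ) = -(cκ)^α e^{κξ}/(2κ). -/

import Mathlib

/-!
For `ξ ≤ 0` every `ξ - s` with `s > 0` is negative, so there `K₀'(ξ - s) = e^{κξ} e^{-κs} / 2` and
the integral defining `K_α` is the Gamma integral `∫₀^∞ s^{-α} e^{-κs} ds = κ^{α-1} Γ(1-α)`.
Continuity follows by dominated convergence: locally uniformly in `ξ` the integrand is bounded by
a multiple of `s^{-α} e^{-κs}`, and for each `s` it is continuous in `ξ` except at `ξ = s`.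
-/

open Real MeasureTheory Filter Topology

/-- The kernel K₀(ξ) = e^{-κ|ξ|}/(2κ). -/
noncomputable def K0 (κ ξ : ℝ) : ℝ := Real.exp (-κ * |ξ|) / (2 * κ)

/-- The (a.e.) derivative of K₀: K₀'(x) = -sign(x) e^{-κ|x|}/2. -/
noncomputable def K0d (κ x : ℝ) : ℝ := -Real.sign x * Real.exp (-κ * |x|) / 2

/-- The kernel K_α(ξ) = -(c^α/Γ(1-α)) ∫₀^∞ K₀'(ξ-s) s^{-α} ds. -/
noncomputable def Kalpha (α c κ ξ : ℝ) : ℝ :=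
  -(c ^ α / Real.Gamma (1 - α)) * ∫ s in Set.Ioi (0 : ℝ), K0d κ (ξ - s) / s ^ α

/-- Convolution (K * g)(ξ) = ∫ K(ξ-y) g(y) dy. -/
noncomputable def conv (K g : ℝ → ℝ) (ξ : ℝ) : ℝ := ∫ y, K (ξ - y) * g y

open Set

lemma Real.abs_sign_le_one (x : ℝ) : |Real.sign x| ≤ 1 := by
  rcases Real.sign_apply_eq x with h | h | h <;> simp [h]

lemma Real.measurable_sign : Measurable Real.sign :=
  Measurable.ite measurableSet_Iio measurable_const <|
    Measurable.ite measurableSet_Ioi measurable_const measurable_const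

lemma measurable_K0d (κ : ℝ) : Measurable (K0d κ) := by
  unfold K0d
  have := Real.measurable_sign
  fun_prop

lemma abs_K0d_le (κ x : ℝ) : |K0d κ x| ≤ Real.exp (-κ * |x|) / 2 := by
  rw [K0d, abs_div, abs_mul, abs_neg, abs_two, abs_of_pos (Real.exp_pos _)]
  gcongr
  exact mul_le_of_le_one_left (Real.exp_pos _).le (Real.abs_sign_le_one x)

lemma K0d_of_neg (κ : ℝ) {x : ℝ} (hx : x < 0) : K0d κ x = Real.exp (κ * x) / 2 := by
  rw [K0d, Real.sign_of_neg hx, abs_of_neg hx]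
  ring_nf

lemma Real.continuousAt_sign_of_ne_zero {x : ℝ} (hx : x ≠ 0) : ContinuousAt Real.sign x := by
  rcases hx.lt_or_gt with h | h
  · exact (continuousAt_const (y := (-1 : ℝ))).congr <| by
      filter_upwards [eventually_lt_nhds h] with y hy using (Real.sign_of_neg hy).symm
  · exact (continuousAt_const (y := (1 : ℝ))).congr <| by
      filter_upwards [eventually_gt_nhds h] with y hy using (Real.sign_of_pos hy).symm

lemma continuousAt_K0d (κ : ℝ) {x : ℝ} (hx : x ≠ 0) : ContinuousAt (K0d κ) x := by
  have := Real.continuousAt_sign_of_ne_zero hx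
  unfold K0d
  fun_prop

lemma integrableOn_rpow_neg_mul_exp_neg_mul {α κ : ℝ} (hα : α < 1) (hκ : 0 < κ) :
    IntegrableOn (fun s : ℝ => s ^ (-α) * Real.exp (-κ * s)) (Ioi 0) := by
  simpa only [Real.rpow_one] using
    integrableOn_rpow_mul_exp_neg_mul_rpow (p := 1) (by linarith) one_pos hκ

lemma norm_K0d_sub_div_rpow_le (α κ : ℝ) {b ξ s : ℝ} (hκ : 0 ≤ κ) (hξ : ξ ≤ b) (hs : 0 < s) :
    ‖K0d κ (ξ - s) / s ^ α‖ ≤ Real.exp (κ * b) / 2 * (s ^ (-α) * Real.exp (-κ * s)) := by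
  have hexp : Real.exp (-κ * |ξ - s|) ≤ Real.exp (κ * b) * Real.exp (-κ * s) := by
    rw [← Real.exp_add, Real.exp_le_exp]
    nlinarith [neg_abs_le (ξ - s)]
  calc ‖K0d κ (ξ - s) / s ^ α‖ = |K0d κ (ξ - s)| / s ^ α := by
        rw [Real.norm_eq_abs, abs_div, abs_of_pos (Real.rpow_pos_of_pos hs α)]
    _ ≤ Real.exp (κ * b) * Real.exp (-κ * s) / 2 / s ^ α := by
        gcongr
        exact (abs_K0d_le κ _).trans (by gcongr)
    _ = Real.exp (κ * b) / 2 * (s ^ (-α) * Real.exp (-κ * s)) := by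
        rw [Real.rpow_neg hs.le]
        ring

lemma continuous_integral_K0d_sub_div_rpow {α κ : ℝ} (hα : α < 1) (hκ : 0 < κ) :
    Continuous fun ξ => ∫ s in Ioi (0 : ℝ), K0d κ (ξ - s) / s ^ α := by
  refine continuous_iff_continuousAt.2 fun ξ₀ => continuousAt_of_dominated
    (bound := fun s => Real.exp (κ * (ξ₀ + 1)) / 2 * (s ^ (-α) * Real.exp (-κ * s))) ?_ ?_
    ((integrableOn_rpow_neg_mul_exp_neg_mul hα hκ).const_mul _) ?_
  · exact .of_forall fun ξ => (((measurable_K0d κ).comp (measurable_const.sub measurable_id)).div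
      (measurable_id.pow_const α)).aestronglyMeasurable
  · filter_upwards [eventually_lt_nhds (lt_add_one ξ₀)] with ξ hξ
    filter_upwards [self_mem_ae_restrict measurableSet_Ioi] with s hs
    exact norm_K0d_sub_div_rpow_le α κ hκ.le hξ.le hs
  · -- the kernel jumps only where `s = ξ₀`, a null set
    filter_upwards [ae_restrict_of_ae (Measure.ae_ne volume ξ₀)] with s hs
    exact ((continuousAt_K0d κ (sub_ne_zero.2 hs.symm)).comp (f := fun ξ => ξ - s)
      (continuousAt_id.sub continuousAt_const)).div_const _

lemma integral_K0d_sub_div_rpow_of_nonpos {α κ ξ : ℝ} (hα : α < 1) (hκ : 0 < κ) (hξ : ξ ≤ 0) :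
    ∫ s in Ioi (0 : ℝ), K0d κ (ξ - s) / s ^ α
      = Real.exp (κ * ξ) / 2 * ((1 / κ) ^ (1 - α) * Real.Gamma (1 - α)) := by
  calc ∫ s in Ioi (0 : ℝ), K0d κ (ξ - s) / s ^ α
      = ∫ s in Ioi (0 : ℝ), Real.exp (κ * ξ) / 2 * (s ^ (1 - α - 1) * Real.exp (-(κ * s))) := by
        refine setIntegral_congr_fun measurableSet_Ioi fun s (hs : 0 < s) => ?_
        rw [K0d_of_neg κ (by linarith), sub_sub_cancel_left, Real.rpow_neg hs.le,
          mul_sub, sub_eq_add_neg, Real.exp_add]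
        ring
    _ = _ := by
        rw [integral_const_mul, Real.integral_rpow_mul_exp_neg_mul_Ioi (by linarith) hκ]

lemma K0_of_nonpos (κ : ℝ) {ξ : ℝ} (hξ : ξ ≤ 0) : K0 κ ξ = Real.exp (κ * ξ) / (2 * κ) := by
  rw [K0, abs_of_nonpos hξ, neg_mul_neg]

lemma Kalpha_of_nonpos {α c κ ξ : ℝ} (hα : α < 1) (hc : 0 ≤ c) (hκ : 0 < κ) (hξ : ξ ≤ 0) :
    Kalpha α c κ ξ = -(c * κ) ^ α * Real.exp (κ * ξ) / (2 * κ) := by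
  have hΓ : Real.Gamma (1 - α) ≠ 0 := (Real.Gamma_pos_of_pos (by linarith)).ne'
  have hκ_pow : (1 / κ) ^ (1 - α) = κ ^ α / κ := by
    rw [Real.div_rpow zero_le_one hκ.le, Real.one_rpow, Real.rpow_sub hκ, Real.rpow_one,
      one_div_div]
  rw [Kalpha, integral_K0d_sub_div_rpow_of_nonpos hα hκ hξ, hκ_pow, Real.mul_rpow hc hκ.le]
  field_simp

/-- `K_α` is continuous, and for ξ ≤ 0 one has `K_α(ξ) = -(cκ)^α K₀(ξ) = -(cκ)^α e^{κξ}/(2κ)`. -/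
theorem Kalpha_continuous_and_neg_side
    (α c κ : ℝ) (hα : α ∈ Set.Ioo (0 : ℝ) 1) (hc : 0 < c) (hκ : 0 < κ) :
    Continuous (Kalpha α c κ) ∧
    ∀ ξ ≤ (0 : ℝ), Kalpha α c κ ξ = -(c * κ) ^ α * K0 κ ξ ∧
      Kalpha α c κ ξ = -(c * κ) ^ α * Real.exp (κ * ξ) / (2 * κ) := by
  refine ⟨continuous_const.mul (continuous_integral_K0d_sub_div_rpow hα.2 hκ), fun ξ hξ => ?_⟩
  have h := Kalpha_of_nonpos hα.2 hc.le hκ hξ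
  exact ⟨by rw [h, K0_of_nonpos κ hξ, mul_div_assoc], h⟩
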